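/- Let d be a finite-dimensional Lie algebra and H = U(d). Write α = r + s ⊗ 1 − 1 ⊗ s with r ∈ d ∧ d and s ∈ d. Then the rank-one Jacobi equation (α ⊗ 1)(Δ ⊗ id)(α) = (1 ⊗ α)(id ⊗ Δ)(α) − (σ ⊗ id)((1 ⊗ α)(id ⊗ Δ)(α)) is equivalent to the system: (1) [r, Δ(s)] = 0 in U(d) ⊗ U(d), and (2) ([r₁₂, r₁₃] + r₁₂·s₃) + cyclic permutations (in the three tensor factors) = 0 in U(d)^{⊗3}. -/

import Mathlib

/-!
STATEMENT 9: Let `d` be a finite-dimensional Lie algebra, `H = U(d)`, and write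
`α = r + s ⊗ 1 − 1 ⊗ s` with `r ∈ d ∧ d`, `s ∈ d`.  Then the rank-one Jacobi equation
`(α ⊗ 1)(Δ ⊗ id)(α) = (1 ⊗ α)(id ⊗ Δ)(α) − (σ ⊗ id)((1 ⊗ α)(id ⊗ Δ)(α))`
is equivalent to the system:
(1) `[r, Δ(s)] = 0` in `U(d) ⊗ U(d)`, and
(2) `([r₁₂, r₁₃] + r₁₂·s₃) + cyclic = 0` in `U(d)^{⊗3}`
(brackets are commutators, "cyclic" sums the two nontrivial cyclic permutations of the
tensor factors, `σ` is the flip of the first two factors).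

Mathlib does not endow `UniversalEnvelopingAlgebra` with its Hopf structure, so the
comultiplication `Δ` is constructed below via the universal property:
`Δ(x) = x ⊗ 1 + 1 ⊗ x` for `x ∈ d`.
-/

open TensorProduct

attribute [local instance 100] LieRing.ofAssociativeRing

noncomputable section

variable (k : Type*) [Field k] [CharZero k]
variable (d : Type*) [LieRing d] [LieAlgebra k d]

local notation "Uk" => UniversalEnvelopingAlgebra k d

/-- The canonical embedding `d → U(d)`. -/
def iotaU : d →ₗ[k] Uk := (UniversalEnvelopingAlgebra.ι k).toLinearMap

/-- The Lie algebra map `d → U(d) ⊗ U(d)`, `x ↦ x ⊗ 1 + 1 ⊗ x`. -/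
def primHom : d →ₗ⁅k⁆ Uk ⊗[k] Uk where
  toLinearMap :=
    ((TensorProduct.mk k Uk Uk).flip 1 + TensorProduct.mk k Uk Uk 1) ∘ₗ iotaU k d
  map_lie' := by
    intro x y
    simp only [LinearMap.toFun_eq_coe, LinearMap.comp_apply, LinearMap.add_apply,
      TensorProduct.mk_apply, LinearMap.flip_apply, iotaU, LieHom.coe_toLinearMap,
      LieHom.map_lie, Ring.lie_def]
    simp only [mul_add, add_mul, Algebra.TensorProduct.tmul_mul_tmul,
      TensorProduct.sub_tmul, TensorProduct.tmul_sub, mul_one, one_mul]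
    abel

/-- The comultiplication `Δ : U(d) → U(d) ⊗ U(d)` of the Hopf algebra `U(d)`. -/
def comulU : Uk →ₐ[k] Uk ⊗[k] Uk :=
  UniversalEnvelopingAlgebra.lift k (primHom k d)

/-- The image of `r ∈ d ⊗ d` in `U(d) ⊗ U(d)`. -/
def rU : d ⊗[k] d →ₗ[k] Uk ⊗[k] Uk := TensorProduct.map (iotaU k d) (iotaU k d)

/-- `α = r + s ⊗ 1 − 1 ⊗ s ∈ U(d) ⊗ U(d)`. -/
def alphaOf (r : d ⊗[k] d) (s : d) : Uk ⊗[k] Uk :=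
  rU k d r + (iotaU k d s) ⊗ₜ[k] (1 : Uk) - (1 : Uk) ⊗ₜ[k] (iotaU k d s)

/-- `id ⊗ Δ : U ⊗ U → U^{⊗3}`. -/
def idComulU : Uk ⊗[k] Uk →ₗ[k] Uk ⊗[k] (Uk ⊗[k] Uk) :=
  LinearMap.lTensor Uk (comulU k d).toLinearMap

/-- `Δ ⊗ id : U ⊗ U → U^{⊗3}` (reassociated). -/
def comulIdU : Uk ⊗[k] Uk →ₗ[k] Uk ⊗[k] (Uk ⊗[k] Uk) :=
  (TensorProduct.assoc k Uk Uk Uk).toLinearMap ∘ₗ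
    LinearMap.rTensor Uk (comulU k d).toLinearMap

/-- `u ↦ u ⊗ 1 : U ⊗ U → U^{⊗3}` (first two factors). -/
def emb12 : Uk ⊗[k] Uk →ₗ[k] Uk ⊗[k] (Uk ⊗[k] Uk) :=
  (TensorProduct.assoc k Uk Uk Uk).toLinearMap ∘ₗ
    ((TensorProduct.mk k (Uk ⊗[k] Uk) Uk).flip 1)

/-- `u ↦ u₁₃`, placing `u ∈ U ⊗ U` in the first and third factors of `U^{⊗3}`. -/
def emb13 : Uk ⊗[k] Uk →ₗ[k] Uk ⊗[k] (Uk ⊗[k] Uk) :=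
  TensorProduct.map LinearMap.id (TensorProduct.mk k Uk Uk 1)

/-- `σ ⊗ id` on `U^{⊗3}`: the transposition of the first two factors. -/
def swap12 : Uk ⊗[k] (Uk ⊗[k] Uk) →ₗ[k] Uk ⊗[k] (Uk ⊗[k] Uk) :=
  (TensorProduct.assoc k Uk Uk Uk).toLinearMap
    ∘ₗ LinearMap.rTensor Uk (TensorProduct.comm k Uk Uk).toLinearMap
    ∘ₗ (TensorProduct.assoc k Uk Uk Uk).symm.toLinearMap

/-- The cyclic permutation `x ⊗ y ⊗ z ↦ y ⊗ z ⊗ x` of `U^{⊗3}`. -/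
def cyc : Uk ⊗[k] (Uk ⊗[k] Uk) →ₗ[k] Uk ⊗[k] (Uk ⊗[k] Uk) :=
  (TensorProduct.assoc k Uk Uk Uk).toLinearMap ∘ₗ
    (TensorProduct.comm k Uk (Uk ⊗[k] Uk)).toLinearMap

/-- `E = [r₁₂, r₁₃] + r₁₂ · s₃`. -/
def cybTerm (r : d ⊗[k] d) (s : d) : Uk ⊗[k] (Uk ⊗[k] Uk) :=
  (emb12 k d (rU k d r) * emb13 k d (rU k d r)
      - emb13 k d (rU k d r) * emb12 k d (rU k d r))
    + emb12 k d (rU k d r) * ((1 : Uk) ⊗ₜ[k] ((1 : Uk) ⊗ₜ[k] iotaU k d s))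

end

/-!
Write `r₁₂, r₁₃, r₂₃` and `s₁, s₂, s₃` for the legs of `r` and `s` in `U(d)^{⊗3}`. Both sides of
the rank-one Jacobi equation are quadratic in these six elements: `Δ` is primitive on `d`, and by
antisymmetry of `r` the flip `σ ⊗ id` and the cyclic permutation act on the legs by
`r₁₂ ↦ -r₁₂` and `r₁₂ ↦ -r₁₃ ↦ r₂₃ ↦ r₁₂`. Since legs in disjoint factors commute, the difference
of the two sides is the cyclic modified CYB sum plus `[r, Δs]₁₂ - [r, Δs]₁₃ + [r, Δs]₂₃`.
Applying `id ⊗ id ⊗ ε` kills everything but `[r, Δs]`, so the Jacobi equation forces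
`[r, Δs] = 0`, after which it is equivalent to the vanishing of the cyclic sum.
-/

theorem jacobi_defect_identity {A : Type*} [Ring A] {a b c t₁ t₂ t₃ : A}
    (h₁₂ : Commute t₁ t₂) (h₁₃ : Commute t₁ t₃) (h₂₃ : Commute t₂ t₃)
    (ha : Commute a t₃) (hb : Commute b t₂) (hc : Commute c t₁) :
    (a + t₁ - t₂) * (b + c + t₁ + t₂ - t₃)
        - ((c + t₂ - t₃) * (a + b + t₁ - t₂ - t₃)
          - (b + t₁ - t₃) * (-a + c + t₂ - t₁ - t₃))
      = (a * b - b * a + a * t₃) + (b * c - c * b - b * t₂) + (a * c - c * a + c * t₁)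
        + ((a * (t₁ + t₂) - (t₁ + t₂) * a) - (b * (t₁ + t₃) - (t₁ + t₃) * b)
          + (c * (t₂ + t₃) - (t₂ + t₃) * c)) := by
  simp only [mul_add, add_mul, mul_sub, sub_mul, mul_neg, h₁₂.eq, h₁₃.eq, h₂₃.eq,
    ha.eq, hb.eq, hc.eq]
  abel

theorem one_tmul_mul {R A B : Type*} [CommSemiring R] [Semiring A] [Algebra R A] [Semiring B]
    [Algebra R B] (b b' : B) : (1 : A) ⊗ₜ[R] (b * b') = (1 ⊗ₜ b) * (1 ⊗ₜ b') := by
  rw [Algebra.TensorProduct.tmul_mul_tmul, one_mul]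

theorem cyclic_sum_cyb_eq {A : Type*} [Ring A] (φ : A →+* A) {a b c t₁ t₂ t₃ : A}
    (ha : φ a = -b) (hb : φ b = -c) (hc : φ c = a) (h₃ : φ t₃ = t₂) (h₂ : φ t₂ = t₁) :
    (a * b - b * a + a * t₃) + φ (a * b - b * a + a * t₃) + φ (φ (a * b - b * a + a * t₃)) =
      (a * b - b * a + a * t₃) + (b * c - c * b - b * t₂) + (a * c - c * a + c * t₁) := by
  simp only [map_add, map_sub, map_mul, map_neg, ha, hb, hc, h₃, h₂, neg_neg]
  noncomm_ring

noncomputable section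

variable (k : Type*) [Field k] (d : Type*) [LieRing d] [LieAlgebra k d]

local notation "Uk" => UniversalEnvelopingAlgebra k d

theorem emb12_mul (u v : Uk ⊗[k] Uk) : emb12 k d (u * v) = emb12 k d u * emb12 k d v :=
  map_mul ((Algebra.TensorProduct.assoc k k k Uk Uk Uk).toAlgHom.comp
    Algebra.TensorProduct.includeLeft) u v

theorem emb13_mul (u v : Uk ⊗[k] Uk) : emb13 k d (u * v) = emb13 k d u * emb13 k d v :=
  map_mul (Algebra.TensorProduct.map (AlgHom.id k Uk) Algebra.TensorProduct.includeRight) u v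

theorem swap12_mul (u v : Uk ⊗[k] (Uk ⊗[k] Uk)) :
    swap12 k d (u * v) = swap12 k d u * swap12 k d v :=
  map_mul (Algebra.TensorProduct.leftComm k Uk Uk Uk) u v

def cycAlgEquiv : Uk ⊗[k] (Uk ⊗[k] Uk) ≃ₐ[k] Uk ⊗[k] (Uk ⊗[k] Uk) :=
  (Algebra.TensorProduct.comm k Uk (Uk ⊗[k] Uk)).trans (Algebra.TensorProduct.assoc k k k Uk Uk Uk)

@[simp] theorem emb12_tmul (x y : Uk) : emb12 k d (x ⊗ₜ y) = x ⊗ₜ (y ⊗ₜ (1 : Uk)) := rfl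
@[simp] theorem emb13_tmul (x y : Uk) : emb13 k d (x ⊗ₜ y) = x ⊗ₜ ((1 : Uk) ⊗ₜ y) := rfl
@[simp] theorem swap12_tmul (x y z : Uk) : swap12 k d (x ⊗ₜ (y ⊗ₜ z)) = y ⊗ₜ (x ⊗ₜ z) := rfl
@[simp] theorem cyc_tmul (x y z : Uk) : cyc k d (x ⊗ₜ (y ⊗ₜ z)) = y ⊗ₜ (z ⊗ₜ x) := rfl
@[simp] theorem rU_tmul (x y : d) : rU k d (x ⊗ₜ y) = iotaU k d x ⊗ₜ iotaU k d y := rfl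

theorem swap12_emb12 (u : Uk ⊗[k] Uk) :
    swap12 k d (emb12 k d u) = emb12 k d (TensorProduct.comm k Uk Uk u) := by
  induction u using TensorProduct.induction_on with
  | zero => simp
  | tmul x y => simp
  | add u v hu hv => simp only [map_add, hu, hv]

theorem swap12_emb13 (u : Uk ⊗[k] Uk) : swap12 k d (emb13 k d u) = 1 ⊗ₜ u := by
  induction u using TensorProduct.induction_on with
  | zero => simp
  | tmul x y => simp
  | add u v hu hv => simp only [map_add, hu, hv, tmul_add]

theorem swap12_one_tmul (u : Uk ⊗[k] Uk) : swap12 k d (1 ⊗ₜ u) = emb13 k d u := by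
  induction u using TensorProduct.induction_on with
  | zero => simp
  | tmul x y => simp
  | add u v hu hv => simp only [map_add, hu, hv, tmul_add]

theorem cyc_emb12 (u : Uk ⊗[k] Uk) :
    cyc k d (emb12 k d u) = emb13 k d (TensorProduct.comm k Uk Uk u) := by
  induction u using TensorProduct.induction_on with
  | zero => simp
  | tmul x y => simp
  | add u v hu hv => simp only [map_add, hu, hv]

theorem cyc_emb13 (u : Uk ⊗[k] Uk) :
    cyc k d (emb13 k d u) = 1 ⊗ₜ TensorProduct.comm k Uk Uk u := by
  induction u using TensorProduct.induction_on with
  | zero => simp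
  | tmul x y => simp
  | add u v hu hv => simp only [map_add, hu, hv, tmul_add]

theorem cyc_one_tmul (u : Uk ⊗[k] Uk) : cyc k d (1 ⊗ₜ u) = emb12 k d u := by
  induction u using TensorProduct.induction_on with
  | zero => simp
  | tmul x y => simp
  | add u v hu hv => simp only [map_add, hu, hv, tmul_add]

theorem commute_emb12_one_tmul_one_tmul (u : Uk ⊗[k] Uk) (z : Uk) :
    Commute (emb12 k d u) (1 ⊗ₜ (1 ⊗ₜ z)) := by
  induction u using TensorProduct.induction_on with
  | zero => simp
  | tmul x y => exact (Commute.one_right x).tmul ((Commute.one_right y).tmul (Commute.one_left z))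
  | add u v hu hv => rw [map_add]; exact hu.add_left hv

theorem commute_emb13_one_tmul_tmul_one (u : Uk ⊗[k] Uk) (y : Uk) :
    Commute (emb13 k d u) (1 ⊗ₜ (y ⊗ₜ 1)) := by
  induction u using TensorProduct.induction_on with
  | zero => simp
  | tmul x z => exact (Commute.one_right x).tmul ((Commute.one_left y).tmul (Commute.one_right z))
  | add u v hu hv => rw [map_add]; exact hu.add_left hv

theorem rU_comm (t : d ⊗[k] d) :
    rU k d (TensorProduct.comm k d d t) = TensorProduct.comm k Uk Uk (rU k d t) := by
  induction t using TensorProduct.induction_on with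
  | zero => simp
  | tmul x y => simp
  | add u v hu hv => simp only [map_add, hu, hv]

theorem comulU_iotaU (x : d) :
    comulU k d (iotaU k d x) = iotaU k d x ⊗ₜ 1 + 1 ⊗ₜ iotaU k d x :=
  UniversalEnvelopingAlgebra.lift_ι_apply k (primHom k d) x

def counitU : Uk →ₐ[k] k := UniversalEnvelopingAlgebra.lift k 0

@[simp] theorem counitU_iotaU (x : d) : counitU k d (iotaU k d x) = 0 :=
  UniversalEnvelopingAlgebra.lift_ι_apply k 0 x

def idIdCounitU : Uk ⊗[k] (Uk ⊗[k] Uk) →ₐ[k] Uk ⊗[k] Uk :=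
  Algebra.TensorProduct.map (AlgHom.id k Uk)
    ((Algebra.TensorProduct.rid k k Uk).toAlgHom.comp
      (Algebra.TensorProduct.map (AlgHom.id k Uk) (counitU k d)))

@[simp] theorem idIdCounitU_tmul (x y z : Uk) :
    idIdCounitU k d (x ⊗ₜ (y ⊗ₜ z)) = counitU k d z • (x ⊗ₜ y) := by
  simp [idIdCounitU, Algebra.TensorProduct.rid_tmul, TensorProduct.tmul_smul]

theorem idIdCounitU_emb12 (u : Uk ⊗[k] Uk) : idIdCounitU k d (emb12 k d u) = u := by
  induction u using TensorProduct.induction_on with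
  | zero => simp
  | tmul x y => simp
  | add u v hu hv => simp only [map_add, hu, hv]

theorem idIdCounitU_emb13_rU (t : d ⊗[k] d) : idIdCounitU k d (emb13 k d (rU k d t)) = 0 := by
  induction t using TensorProduct.induction_on with
  | zero => simp
  | tmul x y => simp
  | add u v hu hv => simp only [map_add, hu, hv, add_zero]

theorem idIdCounitU_one_tmul_rU (t : d ⊗[k] d) : idIdCounitU k d (1 ⊗ₜ rU k d t) = 0 := by
  induction t using TensorProduct.induction_on with
  | zero => simp
  | tmul x y => simp
  | add u v hu hv => simp only [map_add, tmul_add, hu, hv, add_zero]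

theorem comulIdU_rU (t : d ⊗[k] d) :
    comulIdU k d (rU k d t) = emb13 k d (rU k d t) + 1 ⊗ₜ rU k d t := by
  induction t using TensorProduct.induction_on with
  | zero => simp
  | tmul x y => simp [comulIdU, comulU_iotaU, add_tmul]
  | add u v hu hv => simp only [map_add, hu, hv, tmul_add]; abel

theorem idComulU_rU (t : d ⊗[k] d) :
    idComulU k d (rU k d t) = emb12 k d (rU k d t) + emb13 k d (rU k d t) := by
  induction t using TensorProduct.induction_on with
  | zero => simp
  | tmul x y => simp [idComulU, comulU_iotaU, tmul_add]
  | add u v hu hv => simp only [map_add, hu, hv]; abel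

def jacobiDefect (r : d ⊗[k] d) (s : d) : Uk ⊗[k] (Uk ⊗[k] Uk) :=
  emb12 k d (alphaOf k d r s) * comulIdU k d (alphaOf k d r s) -
    ((1 ⊗ₜ alphaOf k d r s) * idComulU k d (alphaOf k d r s)
      - swap12 k d ((1 ⊗ₜ alphaOf k d r s) * idComulU k d (alphaOf k d r s)))

section Legs

variable {k d} {r : d ⊗[k] d} (s : d)

local notation "r₁₂" => emb12 k d (rU k d r)
local notation "r₁₃" => emb13 k d (rU k d r)
local notation "r₂₃" => (1 : Uk) ⊗ₜ[k] rU k d r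
local notation "s₁" => iotaU k d s ⊗ₜ[k] ((1 : Uk) ⊗ₜ[k] (1 : Uk))
local notation "s₂" => (1 : Uk) ⊗ₜ[k] (iotaU k d s ⊗ₜ[k] (1 : Uk))
local notation "s₃" => (1 : Uk) ⊗ₜ[k] ((1 : Uk) ⊗ₜ[k] iotaU k d s)

theorem comm_rU_of_comm_eq_neg (hr : TensorProduct.comm k d d r = -r) :
    TensorProduct.comm k Uk Uk (rU k d r) = -rU k d r := by
  rw [← rU_comm, hr, map_neg]

theorem cyc_r₁₂ (hr : TensorProduct.comm k d d r = -r) : cyc k d r₁₂ = -r₁₃ := by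
  rw [cyc_emb12, comm_rU_of_comm_eq_neg hr, map_neg]

theorem cyc_r₁₃ (hr : TensorProduct.comm k d d r = -r) : cyc k d r₁₃ = -r₂₃ := by
  rw [cyc_emb13, comm_rU_of_comm_eq_neg hr, tmul_neg]

theorem jacobiDefect_eq_legs (hr : TensorProduct.comm k d d r = -r) :
    jacobiDefect k d r s =
      (r₁₂ + s₁ - s₂) * (r₁₃ + r₂₃ + s₁ + s₂ - s₃)
        - ((r₂₃ + s₂ - s₃) * (r₁₂ + r₁₃ + s₁ - s₂ - s₃)
          - (r₁₃ + s₁ - s₃) * (-r₁₂ + r₂₃ + s₂ - s₁ - s₃)) := by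
  have hσ := comm_rU_of_comm_eq_neg hr
  have hΔ₁ : comulIdU k d (iotaU k d s ⊗ₜ 1) = s₁ + s₂ := by
    simp [comulIdU, comulU_iotaU, add_tmul]
  have hΔ₂ : comulIdU k d (1 ⊗ₜ iotaU k d s) = s₃ := by
    simp [comulIdU, Algebra.TensorProduct.one_def]
  have hΔ₃ : idComulU k d (iotaU k d s ⊗ₜ 1) = s₁ := by
    simp [idComulU, Algebra.TensorProduct.one_def]
  have hΔ₄ : idComulU k d (1 ⊗ₜ iotaU k d s) = s₂ + s₃ := by
    simp [idComulU, comulU_iotaU, tmul_add]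
  simp only [jacobiDefect, alphaOf, map_add, map_sub, emb12_tmul, comulIdU_rU, idComulU_rU,
    hΔ₁, hΔ₂, hΔ₃, hΔ₄, tmul_add, tmul_sub, swap12_mul, swap12_emb12, swap12_emb13,
    swap12_one_tmul, swap12_tmul, hσ, map_neg, ← add_assoc, ← sub_sub]

theorem cybTerm_add_cyc_add_cyc_cyc (hr : TensorProduct.comm k d d r = -r) :
    cybTerm k d r s + cyc k d (cybTerm k d r s) + cyc k d (cyc k d (cybTerm k d r s)) =
      (r₁₂ * r₁₃ - r₁₃ * r₁₂ + r₁₂ * s₃) + (r₁₃ * r₂₃ - r₂₃ * r₁₃ - r₁₃ * s₂)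
        + (r₁₂ * r₂₃ - r₂₃ * r₁₂ + r₂₃ * s₁) :=
  -- The ring normalisation happens in an abstract ring: in `U ⊗ (U ⊗ U)` the module `Neg` is not
  -- reducibly the ring `Neg`, so `noncomm_ring` and `neg_mul` do not fire there.
  cyclic_sum_cyb_eq (cycAlgEquiv k d).toRingHom (cyc_r₁₂ hr) (cyc_r₁₃ hr)
    (cyc_one_tmul k d _) (cyc_tmul k d _ _ _) (cyc_tmul k d _ _ _)

theorem jacobiDefect_eq (hr : TensorProduct.comm k d d r = -r) :
    jacobiDefect k d r s =
      (cybTerm k d r s + cyc k d (cybTerm k d r s) + cyc k d (cyc k d (cybTerm k d r s)))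
        + (emb12 k d (rU k d r * comulU k d (iotaU k d s) - comulU k d (iotaU k d s) * rU k d r)
          - emb13 k d (rU k d r * comulU k d (iotaU k d s) - comulU k d (iotaU k d s) * rU k d r)
          + 1 ⊗ₜ (rU k d r * comulU k d (iotaU k d s) - comulU k d (iotaU k d s) * rU k d r)) := by
  rw [jacobiDefect_eq_legs s hr, cybTerm_add_cyc_add_cyc_cyc s hr, comulU_iotaU]
  simp only [map_sub, emb12_mul, emb13_mul, tmul_sub, one_tmul_mul, map_add, emb12_tmul,
    emb13_tmul, tmul_add]
  exact jacobi_defect_identity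
    (by simp [commute_iff_eq, Algebra.TensorProduct.tmul_mul_tmul])
    (by simp [commute_iff_eq, Algebra.TensorProduct.tmul_mul_tmul])
    (by simp [commute_iff_eq, Algebra.TensorProduct.tmul_mul_tmul])
    (commute_emb12_one_tmul_one_tmul k d _ _) (commute_emb13_one_tmul_tmul_one k d _ _)
    ((Commute.one_left _).tmul (Commute.one_right _))

theorem idIdCounitU_jacobiDefect (hr : TensorProduct.comm k d d r = -r) :
    idIdCounitU k d (jacobiDefect k d r s) =
      rU k d r * comulU k d (iotaU k d s) - comulU k d (iotaU k d s) * rU k d r := by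
  rw [jacobiDefect_eq s hr, cybTerm_add_cyc_add_cyc_cyc s hr]
  simp only [map_add, map_sub, map_mul, emb13_mul, one_tmul_mul, tmul_sub, idIdCounitU_emb12,
    idIdCounitU_emb13_rU, idIdCounitU_one_tmul_rU, idIdCounitU_tmul, counitU_iotaU, zero_smul,
    mul_zero, zero_mul, sub_zero, zero_add, add_zero]

end Legs

end

variable (k : Type*) [Field k] [CharZero k]
variable (d : Type*) [LieRing d] [LieAlgebra k d]

local notation "Uk" => UniversalEnvelopingAlgebra k d

theorem rank_one_jacobi_iff_modified_CYB
    (r : d ⊗[k] d) (hr : TensorProduct.comm k d d r = -r) (s : d) :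
    (emb12 k d (alphaOf k d r s) * comulIdU k d (alphaOf k d r s) =
        ((1 : Uk) ⊗ₜ[k] alphaOf k d r s) * idComulU k d (alphaOf k d r s)
          - swap12 k d (((1 : Uk) ⊗ₜ[k] alphaOf k d r s) *
              idComulU k d (alphaOf k d r s)))
    ↔
    ((rU k d r * comulU k d (iotaU k d s) - comulU k d (iotaU k d s) * rU k d r = 0)
      ∧ cybTerm k d r s + cyc k d (cybTerm k d r s) + cyc k d (cyc k d (cybTerm k d r s))
          = 0) := by
  rw [← sub_eq_zero, ← jacobiDefect]
  have hdefect := jacobiDefect_eq s hr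
  constructor
  · intro h
    have hcomm : rU k d r * comulU k d (iotaU k d s) - comulU k d (iotaU k d s) * rU k d r = 0 := by
      rw [← idIdCounitU_jacobiDefect s hr, h, map_zero]
    rw [h, hcomm, map_zero, map_zero, tmul_zero, sub_zero, add_zero, add_zero] at hdefect
    exact ⟨hcomm, hdefect.symm⟩
  · rintro ⟨hcomm, hcyb⟩
    rw [hdefect, hcomm, hcyb, map_zero, map_zero, tmul_zero, sub_zero, add_zero, add_zero]
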